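/- arXiv:1309.3982 — 3 statements merged into one kernel-verified Lean document; each statement's English description precedes it below -/
import Mathlib

section
/- For an integer k > 1 and an indeterminate (or complex number) X with X ≠ 1 and X^k ≠ 1, one has 1/(X-1) - k/(X^k-1) = Σ_{ξ ∈ μ_k, ξ ≠ 1} 1/(1 - ξX), where μ_k denotes the group of k-th roots of unity in ℂ. -/
/-!
Expand `1 / (1 - ξ X) = (∑_{i < k} ξ^i X^i) / (1 - X^k)`, valid because `(ξ X)^k = X^k`. Summing over
all `ξ ∈ μ_k`, the power sums `∑ ξ^i` vanish for `0 < i < k` and equal `k` for `i = 0`, so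
`∑_{ξ ∈ μ_k} 1 / (1 - ξ X) = k / (1 - X^k)`; removing the term `ξ = 1` gives the identity.
-/

open Polynomial Finset

namespace IsPrimitiveRoot

variable {R : Type*} [CommRing R] [IsDomain R] {ζ : R} {k : ℕ}

theorem sum_nthRootsFinset_one_eq_sum_range {M : Type*} [AddCommMonoid M]
    (hζ : IsPrimitiveRoot ζ k) (f : R → M) :
    ∑ η ∈ nthRootsFinset k (1 : R), f η = ∑ j ∈ range k, f (ζ ^ j) := by
  classical
  rw [nthRootsFinset_def, ← Multiset.toFinset_eq (hζ.nthRoots_one_nodup), sum_mk,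
    hζ.nthRoots_eq (one_pow k), Multiset.map_map, sum_eq_multiset_sum]
  simp only [Function.comp_def, mul_one, range_val]

theorem sum_nthRootsFinset_pow_eq_zero (hζ : IsPrimitiveRoot ζ k) {i : ℕ} (hi : ¬k ∣ i) :
    ∑ η ∈ nthRootsFinset k (1 : R), η ^ i = 0 := by
  have hζi : ζ ^ i - 1 ≠ 0 := sub_ne_zero.mpr fun h => hi ((hζ.pow_eq_one_iff_dvd i).mp h)
  rw [hζ.sum_nthRootsFinset_one_eq_sum_range]
  refine (mul_eq_zero.mp ?_).resolve_right hζi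
  simp_rw [← pow_mul, mul_comm _ i, pow_mul]
  rw [geom_sum_mul, ← pow_mul, mul_comm, pow_mul, hζ.pow_eq_one, one_pow, sub_self]

theorem sum_range_mul_sum_nthRootsFinset_pow (hζ : IsPrimitiveRoot ζ k) (hk : 0 < k) (x : R) :
    ∑ i ∈ range k, x ^ i * ∑ η ∈ nthRootsFinset k (1 : R), η ^ i = k := by
  obtain ⟨m, rfl⟩ : ∃ m, k = m + 1 := ⟨k - 1, by omega⟩
  rw [sum_range_succ', sum_eq_zero fun i hi => ?_]
  · simp [hζ.card_nthRootsFinset]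
  · rw [hζ.sum_nthRootsFinset_pow_eq_zero, mul_zero]
    exact Nat.not_dvd_of_pos_of_lt i.succ_pos (by simpa using mem_range.mp hi)

end IsPrimitiveRoot

theorem one_div_one_sub_mul_eq_geom_sum_div {K : Type*} [Field K] {k : ℕ} {x η : K}
    (hx : x ^ k ≠ 1) (hη : η ^ k = 1) :
    1 / (1 - η * x) = (∑ i ∈ range k, η ^ i * x ^ i) / (1 - x ^ k) := by
  have hgeom := mul_neg_geom_sum (η * x) k
  rw [mul_pow, hη, one_mul] at hgeom
  have hxk : 1 - x ^ k ≠ 0 := sub_ne_zero.mpr (Ne.symm hx)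
  rw [div_eq_div_iff (left_ne_zero_of_mul (hgeom ▸ hxk)) hxk, one_mul, ← hgeom]
  simp_rw [mul_pow, mul_comm]

theorem IsPrimitiveRoot.sum_nthRootsFinset_one_div_one_sub_mul {K : Type*} [Field K] {ζ : K}
    {k : ℕ} (hζ : IsPrimitiveRoot ζ k) {x : K} (hx : x ^ k ≠ 1) :
    ∑ η ∈ nthRootsFinset k (1 : K), 1 / (1 - η * x) = k / (1 - x ^ k) := by
  have hk : 0 < k := Nat.pos_of_ne_zero fun h => hx (h ▸ pow_zero x)
  rw [sum_congr rfl fun η hη =>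
      one_div_one_sub_mul_eq_geom_sum_div hx ((Polynomial.mem_nthRootsFinset hk 1).mp hη),
    ← sum_div, sum_comm, ← hζ.sum_range_mul_sum_nthRootsFinset_pow hk x]
  simp_rw [mul_sum, mul_comm]

theorem statement0_general (k : ℕ) (X : ℂ) (hXk : X ^ k ≠ 1) :
    1 / (X - 1) - (k : ℂ) / (X ^ k - 1) =
      ∑ ξ ∈ (nthRootsFinset k (1 : ℂ)).erase 1, 1 / (1 - ξ * X) := by
  have hk : k ≠ 0 := fun h => hXk (h ▸ pow_zero X)
  rw [sum_erase_eq_sub (one_mem_nthRootsFinset (Nat.pos_of_ne_zero hk)),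
    (Complex.isPrimitiveRoot_exp k hk).sum_nthRootsFinset_one_div_one_sub_mul hXk,
    one_mul, ← neg_sub X, ← neg_sub (X ^ k), div_neg, div_neg]
  ring

/-- For an integer `k > 1` and `X : ℂ` with `X ≠ 1`, `X^k ≠ 1`:
`1/(X-1) - k/(X^k-1) = ∑_{ξ ∈ μ_k, ξ ≠ 1} 1/(1 - ξX)`. -/
theorem statement0 (k : ℕ) (hk : 1 < k) (X : ℂ) (hX : X ≠ 1) (hXk : X ^ k ≠ 1) :
    1 / (X - 1) - (k : ℂ) / (X ^ k - 1) =
      ∑ ξ ∈ (nthRootsFinset k (1 : ℂ)).erase 1, 1 / (1 - ξ * X) :=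
  statement0_general k X hXk
end

section
/- Let c be an integer greater than 1. For every nonnegative integer n, (1 - c^{n+1}) · B_{n+1}/(n+1) = Σ_{ξ^c = 1, ξ ≠ 1} 𝔅_n(ξ), where the sum runs over nontrivial complex c-th roots of unity. -/
/-!
Summing `1 / (1 - ξ x)` over all `c`-th roots of unity `ξ` gives `c / (1 - x ^ c)`; in polynomial
form this is `∑_ξ ∏_{η ≠ ξ} (1 - η X) = c`, obtained by differentiating
`∏_ξ (1 - ξ X) = 1 - X ^ c`. Substituting `x = e^t` and removing the term `ξ = 1`, the exponential
generating function of `∑_{ξ ≠ 1} 𝔅_n(ξ)` is `c / (1 - e^{ct}) - 1 / (1 - e^t) = (B(t) - B(ct)) / t`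
with `B(t) = t / (e^t - 1)`, and comparing coefficients of `t^n` gives the identity.
-/

open Polynomial PowerSeries

/-- The twisted Bernoulli numbers `𝔅_n(ξ)` (for `ξ ≠ 1`), defined by the expansion
`1/(1 - ξ e^t) = Σ_{n≥0} 𝔅_n(ξ) t^n/n!`. -/
noncomputable def twistedBernoulli (ξ : ℂ) (n : ℕ) : ℂ :=
  (n.factorial : ℂ) * PowerSeries.coeff n (1 - PowerSeries.C ξ * PowerSeries.exp ℂ)⁻¹

section RootsOfUnity

variable {R : Type*} [CommRing R] [IsDomain R] {ζ : R} {c : ℕ}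

theorem IsPrimitiveRoot.prod_one_sub_C_mul_X [Infinite R] (hζ : IsPrimitiveRoot ζ c) (hc : 0 < c) :
    ∏ ξ ∈ nthRootsFinset c (1 : R), (1 - Polynomial.C ξ * Polynomial.X) = 1 - Polynomial.X ^ c :=
  Polynomial.funext fun y => by
    simpa [eval_prod] using (hζ.pow_sub_pow_eq_prod_sub_mul 1 y hc).symm

theorem IsPrimitiveRoot.sum_prod_erase_one_sub_C_mul_X [Infinite R] [DecidableEq R]
    (hζ : IsPrimitiveRoot ζ c) (hc : 0 < c) :
    ∑ ξ ∈ nthRootsFinset c (1 : R), ∏ η ∈ (nthRootsFinset c (1 : R)).erase ξ,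
      (1 - Polynomial.C η * Polynomial.X) = (c : R[X]) := by
  set μ := nthRootsFinset c (1 : R)
  set Q : R → R[X] := fun ξ => ∏ η ∈ μ.erase ξ, (1 - Polynomial.C η * Polynomial.X)
  have hprod : ∀ ξ ∈ μ, (1 - Polynomial.C ξ * Polynomial.X) * Q ξ = 1 - Polynomial.X ^ c :=
    fun ξ hξ => (Finset.mul_prod_erase _ _ hξ).trans (hζ.prod_one_sub_C_mul_X hc)
  have hderiv : ∑ ξ ∈ μ, Q ξ * Polynomial.C ξ = (c : R[X]) * Polynomial.X ^ (c - 1) := by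
    have h := congrArg derivative (hζ.prod_one_sub_C_mul_X hc)
    simp only [derivative_prod_finset, derivative_sub, Polynomial.derivative_one,
      Polynomial.derivative_mul, Polynomial.derivative_C, Polynomial.derivative_X,
      derivative_X_pow, zero_mul, zero_add, zero_sub, mul_one, mul_neg, Finset.sum_neg_distrib,
      neg_inj] at h
    rw [h, ← C_eq_natCast]
  calc ∑ ξ ∈ μ, Q ξ
      = ∑ ξ ∈ μ, ((1 - Polynomial.X ^ c) + Q ξ * Polynomial.C ξ * Polynomial.X) :=
        Finset.sum_congr rfl fun ξ hξ => by linear_combination hprod ξ hξ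
    _ = c := by
        rw [Finset.sum_add_distrib, Finset.sum_const, hζ.card_nthRootsFinset, ← Finset.sum_mul,
          hderiv, nsmul_eq_mul, mul_assoc, ← pow_succ, Nat.sub_add_cancel hc]
        ring

end RootsOfUnity

theorem Finset.prod_mul_sum_erase_of_mul_eq_one {ι A : Type*} [CommRing A] [DecidableEq ι]
    {s : Finset ι} {a : ι} (ha : a ∈ s) {f g : ι → A} (hfg : ∀ i ∈ s.erase a, f i * g i = 1) :
    (∏ i ∈ s, f i) * ∑ i ∈ s.erase a, g i =
      ∑ i ∈ s, ∏ j ∈ s.erase i, f j - ∏ j ∈ s.erase a, f j := by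
  rw [Finset.mul_sum, ← Finset.sum_erase_eq_sub ha]
  refine Finset.sum_congr rfl fun i hi => ?_
  rw [← Finset.mul_prod_erase _ _ (Finset.mem_of_mem_erase hi), mul_right_comm, hfg i hi, one_mul]

section TwistedBernoulli

variable {K : Type*} [Field K] [CharZero K] [DecidableEq K] {ζ : K} {c : ℕ}

theorem IsPrimitiveRoot.X_mul_sum_inv_one_sub_C_mul_exp (hζ : IsPrimitiveRoot ζ c) (hc : 0 < c) :
    PowerSeries.X * ∑ ξ ∈ (nthRootsFinset c (1 : K)).erase 1, (1 - PowerSeries.C ξ * exp K)⁻¹ =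
      bernoulliPowerSeries K - rescale (c : K) (bernoulliPowerSeries K) := by
  set μ := nthRootsFinset c (1 : K)
  set E := exp K
  set B := bernoulliPowerSeries K
  set F : K → K⟦X⟧ := fun ξ => 1 - PowerSeries.C ξ * E
  set Q := ∏ η ∈ μ.erase 1, F η
  have hF : ∀ η, Polynomial.aeval E (1 - Polynomial.C η * Polynomial.X) = F η := fun η => by
    simp [F]
  have hprod : ∏ ξ ∈ μ, F ξ = 1 - E ^ c := by
    simpa [hF] using congrArg (Polynomial.aeval E) (hζ.prod_one_sub_C_mul_X hc)
  have hsum : ∑ ξ ∈ μ, ∏ η ∈ μ.erase ξ, F η = c := by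
    simpa [hF] using congrArg (Polynomial.aeval E) (hζ.sum_prod_erase_one_sub_C_mul_X hc)
  have h1 : (1 : K) ∈ μ := one_mem_nthRootsFinset hc
  have hinv : ∀ ξ ∈ μ.erase 1, F ξ * (F ξ)⁻¹ = 1 := fun ξ hξ =>
    PowerSeries.mul_inv_cancel _ <| by
      simpa [F, E, sub_eq_zero] using (Finset.ne_of_mem_erase hξ).symm
  have hPG := Finset.prod_mul_sum_erase_of_mul_eq_one h1 hinv
  rw [hprod, hsum] at hPG
  have hfactor : 1 - E ^ c = (1 - E) * Q := by
    rw [← hprod, ← Finset.mul_prod_erase _ _ h1, show F 1 = 1 - E by simp [F]]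
  have hB : B * (E - 1) = PowerSeries.X := bernoulliPowerSeries_mul_exp_sub_one K
  have hBc : rescale (c : K) B * (E ^ c - 1) = (c : K⟦X⟧) * PowerSeries.X := by
    simpa [exp_pow_eq_rescale_exp, E, B] using congrArg (rescale (c : K)) hB
  have hP : 1 - E ^ c ≠ 0 := fun h => by
    have hcX := congrArg (PowerSeries.coeff 1) hBc
    simp [show E ^ c - 1 = 0 by linear_combination -h] at hcX
    exact hc.ne' (Nat.cast_eq_zero.mp hcX.symm)
  -- after multiplication by `1 - E ^ c`, both sides become `X * (c - Q)`
  refine mul_left_cancel₀ hP ?_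
  linear_combination PowerSeries.X * hPG - B * hfactor + Q * hB - hBc

end TwistedBernoulli

/-- For an integer `c > 1` and `n ≥ 0`:
`(1 - c^{n+1}) B_{n+1}/(n+1) = Σ_{ξ^c = 1, ξ ≠ 1} 𝔅_n(ξ)`. -/
theorem statement1 (c : ℕ) (hc : 1 < c) (n : ℕ) :
    (1 - (c : ℂ) ^ (n + 1)) * ((bernoulli (n + 1) : ℚ) : ℂ) / (n + 1) =
      ∑ ξ ∈ (nthRootsFinset c (1 : ℂ)).erase 1, twistedBernoulli ξ n := by
  have hc0 : 0 < c := by omega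
  have hG := congrArg (PowerSeries.coeff (n + 1))
    ((Complex.isPrimitiveRoot_exp c hc0.ne').X_mul_sum_inv_one_sub_C_mul_exp hc0)
  rw [coeff_succ_X_mul, map_sub, coeff_rescale, bernoulliPowerSeries, coeff_mk, map_sum,
    eq_ratCast] at hG
  simp only [twistedBernoulli, ← Finset.mul_sum, hG]
  have hfac : (n.factorial : ℂ) ≠ 0 := Nat.cast_ne_zero.mpr n.factorial_ne_zero
  push_cast [Nat.factorial_succ]
  field_simp
end

section
/- For an integer c > 1 and k, l ≥ 0, the double sum over pairs of nontrivial c-th roots of unity satisfies: Σ_{ξ_1 ∈ μ_c, ξ_1≠1} Σ_{ξ_2 ∈ μ_c, ξ_2≠1} 𝔅(k, l; ξ_1, ξ_2; γ_1, γ_2) = Σ_{j=0}^{l} C(l,j) (1 - c^{k+j+1})(1 - c^{l-j+1}) · (B_{k+j+1}/(k+j+1)) · (B_{l-j+1}/(l-j+1)) · γ_1^{k+j} γ_2^{l-j}. -/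
/-!
For a `c`-th root of unity `ξ ≠ 1` and a power series `x` with constant term `1`,
`1/(1 - ξx) = y/(y - ξ)` where `y = x⁻¹`; summing over `ξ ≠ 1` gives the logarithmic derivative
`y G'(y)/G(y)` of `G = ∏_{ξ ≠ 1} (X - ξ) = (X^c - 1)/(X - 1)`. For `x = e^t` this is
`(B(t) - B(ct))/t = Σ_m (1 - c^{m+1}) (B_{m+1}/(m+1)) t^m/m!`, where `B(t) = t/(e^t - 1)`.
Substituting `t ↦ γ₁(t₁ + t₂)` and `t ↦ γ₂ t₂` identifies the two sums of inverses that make up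
the double sum, and the coefficient of `t₁^k t₂^l` in their product is the stated convolution.
-/

open Polynomial

/-- The two-variable power series `e^{γ(t₁+t₂)}`: its coefficient at `t₁^a t₂^b`
is `γ^{a+b}/(a! b!)`. -/
noncomputable def expT12 (γ : ℂ) : MvPowerSeries (Fin 2) ℂ :=
  fun m => γ ^ (m 0 + m 1) / (((m 0).factorial : ℂ) * ((m 1).factorial : ℂ))

/-- The two-variable power series `e^{γ t₂}`: its coefficient at `t₁^a t₂^b`
is `γ^b/b!` if `a = 0` and `0` otherwise. -/
noncomputable def expT2 (γ : ℂ) : MvPowerSeries (Fin 2) ℂ :=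
  fun m => if m 0 = 0 then γ ^ (m 1) / ((m 1).factorial : ℂ) else 0

/-- The twisted double Bernoulli numbers `𝔅(k,l;ξ₁,ξ₂;γ₁,γ₂)`, defined by the
two-variable Taylor expansion
`(1/(1 - ξ₁ e^{γ₁(t₁+t₂)})) · (1/(1 - ξ₂ e^{γ₂ t₂}))
  = Σ_{k,l ≥ 0} 𝔅(k,l;ξ₁,ξ₂;γ₁,γ₂) t₁^k t₂^l/(k! l!)`. -/
noncomputable def doubleBernoulli (ξ₁ ξ₂ γ₁ γ₂ : ℂ) (k l : ℕ) : ℂ :=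
  (k.factorial : ℂ) * (l.factorial : ℂ) *
    MvPowerSeries.coeff (R := ℂ) (Finsupp.single (0 : Fin 2) k + Finsupp.single (1 : Fin 2) l)
      ((1 - MvPowerSeries.C (σ := Fin 2) (R := ℂ) ξ₁ * expT12 γ₁)⁻¹ *
        (1 - MvPowerSeries.C (σ := Fin 2) (R := ℂ) ξ₂ * expT2 γ₂)⁻¹)

open PowerSeries

lemma MvPowerSeries.sum_inv_one_sub_C_mul_mul_aeval {σ k : Type*} [Field k] [DecidableEq k]
    (s : Finset k) {x y : MvPowerSeries σ k} (hxy : x * y = 1)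
    (hs : ∀ ξ ∈ s, constantCoeff (1 - C ξ * x) ≠ 0) :
    (∑ ξ ∈ s, (1 - C ξ * x)⁻¹) * Polynomial.aeval y (∏ ξ ∈ s, (Polynomial.X - Polynomial.C ξ)) =
      y * Polynomial.aeval y
        (Polynomial.derivative (∏ ξ ∈ s, (Polynomial.X - Polynomial.C ξ))) := by
  simp only [Polynomial.derivative_prod_finset, Polynomial.derivative_X,
    Polynomial.derivative_C, sub_zero, mul_one, map_sum, map_prod, map_sub, Polynomial.aeval_X,
    Polynomial.aeval_C, Finset.sum_mul, Finset.mul_sum]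
  refine Finset.sum_congr rfl fun ξ hξ => ?_
  have hfactor : y - algebraMap k _ ξ = y * (1 - C ξ * x) := by
    rw [← MvPowerSeries.c_eq_algebraMap]
    linear_combination C ξ * hxy
  rw [← Finset.mul_prod_erase s _ hξ, hfactor, mul_comm y, mul_assoc, ← mul_assoc _ _ (y * _),
    MvPowerSeries.inv_mul_cancel _ (hs ξ hξ), one_mul]

open Finset.HasAntidiagonal in
lemma MvPowerSeries.coeff_mul_subst_X {σ R : Type*} [DecidableEq σ] [CommRing R]
    (F : MvPowerSeries σ R) (g : R⟦X⟧) (s : σ) (e : σ →₀ ℕ) :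
    coeff e (F * g.subst (X s)) =
      ∑ j ∈ Finset.range (e s + 1), coeff (e - Finsupp.single s j) F * PowerSeries.coeff j g := by
  set split : ℕ → (σ →₀ ℕ) × (σ →₀ ℕ) := fun j => (e - Finsupp.single s j, Finsupp.single s j)
  have hsub : (Finset.range (e s + 1)).image split ⊆ antidiagonal e := by
    simp only [Finset.subset_iff, Finset.mem_image, Finset.mem_range, mem_antidiagonal]
    rintro _ ⟨j, hj, rfl⟩
    refine tsub_add_cancel_of_le ?_
    simpa [Finsupp.single_le_iff] using Nat.lt_succ_iff.mp hj
  rw [coeff_mul, ← Finset.sum_subset hsub, Finset.sum_image]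
  · refine Finset.sum_congr rfl fun j _ => ?_
    simp [split, PowerSeries.coeff_subst_single]
  · intro i _ j _ h
    simpa [split] using congrArg (fun p => p.2 s) h
  · rintro ⟨p₁, p₂⟩ hp hnot
    rw [PowerSeries.coeff_subst_single, if_neg, mul_zero]
    intro h
    have hsum := mem_antidiagonal.mp hp
    refine hnot (Finset.mem_image.mpr ⟨p₂ s, ?_, ?_⟩)
    · have hs := congrArg (fun q => q s) hsum
      simp only [Finsupp.add_apply] at hs
      exact Finset.mem_range.mpr (by omega)
    · simp only [split, ← h, ← hsum, add_tsub_cancel_right]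

lemma X_sub_one_mul_prod_nthRootsFinset_erase_one {c : ℕ} (hc : 0 < c) :
    (Polynomial.X - 1) * ∏ ξ ∈ (nthRootsFinset c (1 : ℂ)).erase 1,
      (Polynomial.X - Polynomial.C ξ) = Polynomial.X ^ c - 1 := by
  rw [Polynomial.X_pow_sub_one_eq_prod hc (Complex.isPrimitiveRoot_exp c hc.ne'),
    ← Finset.mul_prod_erase _ _ (Polynomial.one_mem_nthRootsFinset hc), map_one]

noncomputable def bernoulliDifferenceQuotient (c : ℕ) : ℂ⟦X⟧ :=
  mk fun m => (1 - (c : ℂ) ^ (m + 1)) * ((bernoulli (m + 1) : ℂ) / (m + 1)) / m.factorial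

lemma X_mul_bernoulliDifferenceQuotient (c : ℕ) :
    PowerSeries.X * bernoulliDifferenceQuotient c =
      bernoulliPowerSeries ℂ - rescale (c : ℂ) (bernoulliPowerSeries ℂ) := by
  ext (_ | m)
  · rw [coeff_zero_X_mul, map_sub, coeff_rescale]
    simp [bernoulliPowerSeries]
  · rw [coeff_succ_X_mul, map_sub, coeff_rescale]
    simp only [bernoulliDifferenceQuotient, bernoulliPowerSeries, coeff_mk, map_div₀,
      eq_ratCast, Rat.cast_natCast, Nat.factorial_succ]
    push_cast
    field_simp

lemma bernoulliDifferenceQuotient_mul_aeval {c : ℕ} {G : Polynomial ℂ}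
    (hG : (Polynomial.X - 1) * G = Polynomial.X ^ c - 1) :
    bernoulliDifferenceQuotient c * Polynomial.aeval (evalNegHom (exp ℂ)) G =
      evalNegHom (exp ℂ) * Polynomial.aeval (evalNegHom (exp ℂ)) (Polynomial.derivative G) := by
  set e := exp ℂ
  set f := evalNegHom (exp ℂ)
  have hef : e * f = 1 := exp_mul_exp_neg_eq_one
  have hefc : e ^ c * f ^ c = 1 := by rw [← mul_pow, hef, one_pow]
  have hG₀ := congrArg (Polynomial.aeval f) hG
  have hG₁ := congrArg (Polynomial.aeval f ∘ Polynomial.derivative) hG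
  simp only [Function.comp_apply, Polynomial.derivative_mul, map_sub, map_add, map_mul, map_pow,
    map_one, Polynomial.derivative_X, Polynomial.derivative_one, Polynomial.derivative_X_pow,
    Polynomial.aeval_X, Polynomial.aeval_C, sub_zero, one_mul] at hG₀ hG₁
  have hcf : algebraMap ℂ ℂ⟦X⟧ c * f ^ (c - 1) * f = PowerSeries.C (c : ℂ) * f ^ c := by
    cases c <;> simp [pow_succ, mul_assoc]
  have hB : bernoulliPowerSeries ℂ * (f - 1) = -(f * PowerSeries.X) := by
    linear_combination (-f) * bernoulliPowerSeries_mul_exp_sub_one ℂ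
      + bernoulliPowerSeries ℂ * hef
  have hBc : rescale (c : ℂ) (bernoulliPowerSeries ℂ) * (f ^ c - 1) =
      -(f ^ c * (PowerSeries.C (c : ℂ) * PowerSeries.X)) := by
    have h := congrArg (rescale (c : ℂ)) (bernoulliPowerSeries_mul_exp_sub_one ℂ)
    rw [map_mul, map_sub, map_one, ← exp_pow_eq_rescale_exp, rescale_X] at h
    linear_combination (-f ^ c) * h + rescale (c : ℂ) (bernoulliPowerSeries ℂ) * hefc
  have hf : f - 1 ≠ 0 := by
    intro h
    have := congrArg (PowerSeries.coeff 1) h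
    simp [f, evalNegHom, coeff_rescale] at this
  -- after multiplying by `t (e^{-t} - 1)`, both sides are computed by `B(t) (e^t - 1) = t`
  -- and `B(ct) (e^{ct} - 1) = ct`
  refine mul_left_cancel₀ (mul_ne_zero X_ne_zero hf) ?_
  linear_combination (f - 1) * Polynomial.aeval f G * X_mul_bernoulliDifferenceQuotient c
    - rescale (c : ℂ) (bernoulliPowerSeries ℂ) * hG₀
    - X * f * hG₁ - X * hcf + Polynomial.aeval f G * hB - hBc

lemma sum_inv_one_sub_C_mul_eq_bernoulliDifferenceQuotient {σ : Type*} {c : ℕ} (hc : 0 < c)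
    (ψ : ℂ⟦X⟧ →ₐ[ℂ] MvPowerSeries σ ℂ) (hψ : MvPowerSeries.constantCoeff (ψ (exp ℂ)) = 1) :
    ∑ ξ ∈ (nthRootsFinset c (1 : ℂ)).erase 1, (1 - MvPowerSeries.C ξ * ψ (exp ℂ))⁻¹ =
      ψ (bernoulliDifferenceQuotient c) := by
  set G := ∏ ξ ∈ (nthRootsFinset c (1 : ℂ)).erase 1, (Polynomial.X - Polynomial.C ξ)
  set y := ψ (evalNegHom (exp ℂ))
  have hxy : ψ (exp ℂ) * y = 1 := by rw [← map_mul, exp_mul_exp_neg_eq_one, map_one]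
  have hy : MvPowerSeries.constantCoeff y = 1 := by
    simpa [hψ] using congrArg MvPowerSeries.constantCoeff hxy
  have hroots : ∀ ξ ∈ (nthRootsFinset c (1 : ℂ)).erase 1, (1 : ℂ) - ξ ≠ 0 :=
    fun ξ hξ => sub_ne_zero.mpr (Finset.ne_of_mem_erase hξ).symm
  have hsum := MvPowerSeries.sum_inv_one_sub_C_mul_mul_aeval _ hxy fun ξ hξ => by
    simpa [hψ] using hroots ξ hξ
  have hψH : ψ (bernoulliDifferenceQuotient c) * Polynomial.aeval y G =
      y * Polynomial.aeval y (Polynomial.derivative G) := by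
    rw [Polynomial.aeval_algHom_apply ψ, Polynomial.aeval_algHom_apply ψ, ← map_mul, ← map_mul,
      bernoulliDifferenceQuotient_mul_aeval (X_sub_one_mul_prod_nthRootsFinset_erase_one hc)]
  have hunit : IsUnit (Polynomial.aeval y G) := by
    rw [MvPowerSeries.isUnit_iff_constantCoeff, isUnit_iff_ne_zero]
    simpa [G, map_prod, hy, ← MvPowerSeries.c_eq_algebraMap] using
      Finset.prod_ne_zero_iff.mpr hroots
  exact hunit.mul_right_cancel (hsum.trans hψH.symm)

lemma sum_inv_one_sub_C_mul_subst_rescale_exp {σ : Type*} {c : ℕ} (hc : 0 < c)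
    {a : MvPowerSeries σ ℂ} (ha : HasSubst a) (γ : ℂ) :
    ∑ ξ ∈ (nthRootsFinset c (1 : ℂ)).erase 1,
        (1 - MvPowerSeries.C ξ * subst a (rescale γ (exp ℂ)))⁻¹ =
      subst a (rescale γ (bernoulliDifferenceQuotient c)) := by
  have hconst : MvPowerSeries.constantCoeff (subst a (rescale γ (exp ℂ))) = 1 := by
    rw [constantCoeff_subst ha, finsum_eq_single _ 0]
    · simp
    · intro d hd
      simp [isNilpotent_iff_eq_zero.mp ha, hd]
  have hrescale (f : ℂ⟦X⟧) : rescaleAlgHom γ f = rescale γ f := by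
    rw [← coe_rescaleAlgHom]; rfl
  simpa [coe_substAlgHom, hrescale] using
    sum_inv_one_sub_C_mul_eq_bernoulliDifferenceQuotient hc
      ((substAlgHom ha).comp (rescaleAlgHom γ)) (by simpa [coe_substAlgHom, hrescale] using hconst)

lemma expT12_eq_subst (γ : ℂ) :
    expT12 γ = subst (MvPowerSeries.X 0 + MvPowerSeries.X 1) (rescale γ (exp ℂ)) := by
  ext e
  rw [coeff_subst_X_zero_add_X_one, coeff_rescale, coeff_exp, Nat.cast_add_choose]
  simp only [expT12, MvPowerSeries.coeff_apply, map_div₀, map_one, map_natCast]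
  have : ((e 0 + e 1).factorial : ℂ) ≠ 0 := Nat.cast_ne_zero.mpr (Nat.factorial_ne_zero _)
  field_simp

lemma expT2_eq_subst (γ : ℂ) : expT2 γ = subst (MvPowerSeries.X 1) (rescale γ (exp ℂ)) := by
  ext e
  have he : e = Finsupp.single 1 (e 1) ↔ e 0 = 0 := by simp [Finsupp.ext_iff, Fin.forall_fin_two]
  rw [coeff_subst_single, coeff_rescale, coeff_exp, if_congr he rfl rfl]
  simp [expT2, MvPowerSeries.coeff_apply, div_eq_mul_inv]

lemma coeff_subst_X_zero_add_X_one_mul_subst_X_one {R : Type*} [CommRing R] (f g : R⟦X⟧)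
    (k l : ℕ) :
    MvPowerSeries.coeff (Finsupp.single (0 : Fin 2) k + Finsupp.single (1 : Fin 2) l)
        (subst (MvPowerSeries.X 0 + MvPowerSeries.X 1) f * subst (MvPowerSeries.X 1) g) =
      ∑ j ∈ Finset.range (l + 1),
        ((k + j).choose k : R) * PowerSeries.coeff (k + j) f * PowerSeries.coeff (l - j) g := by
  have hl : (Finsupp.single (0 : Fin 2) k + Finsupp.single (1 : Fin 2) l) 1 = l := by simp
  rw [MvPowerSeries.coeff_mul_subst_X, hl, ← Finset.sum_range_reflect]
  refine Finset.sum_congr rfl fun j hj => ?_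
  have hjl : j ≤ l := Nat.lt_succ_iff.mp (Finset.mem_range.mp hj)
  simp [coeff_subst_X_zero_add_X_one, Nat.sub_sub_self hjl]

/-- For an integer `c > 1` and `k, l ≥ 0`:
`Σ_{ξ₁,ξ₂ ∈ μ_c \ {1}} 𝔅(k,l;ξ₁,ξ₂;γ₁,γ₂)
  = Σ_{j=0}^{l} C(l,j) (1-c^{k+j+1})(1-c^{l-j+1}) (B_{k+j+1}/(k+j+1)) (B_{l-j+1}/(l-j+1))
      γ₁^{k+j} γ₂^{l-j}`. -/
theorem statement6 (c : ℕ) (hc : 1 < c) (γ₁ γ₂ : ℂ) (k l : ℕ) :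
    ∑ ξ₁ ∈ (nthRootsFinset c (1 : ℂ)).erase 1, ∑ ξ₂ ∈ (nthRootsFinset c (1 : ℂ)).erase 1,
        doubleBernoulli ξ₁ ξ₂ γ₁ γ₂ k l =
      ∑ j ∈ Finset.range (l + 1),
        (l.choose j : ℂ) * (1 - (c : ℂ) ^ (k + j + 1)) * (1 - (c : ℂ) ^ (l - j + 1)) *
          (((bernoulli (k + j + 1) : ℚ) : ℂ) / (k + j + 1)) *
          (((bernoulli (l - j + 1) : ℚ) : ℂ) / (l - j + 1)) *
          γ₁ ^ (k + j) * γ₂ ^ (l - j) := by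
  have hc₀ : 0 < c := by omega
  simp only [doubleBernoulli, ← Finset.mul_sum, ← map_sum, ← Finset.sum_mul]
  rw [expT12_eq_subst, expT2_eq_subst,
    sum_inv_one_sub_C_mul_subst_rescale_exp hc₀ ((HasSubst.X 0).add (HasSubst.X 1)),
    sum_inv_one_sub_C_mul_subst_rescale_exp hc₀ (HasSubst.X 1),
    coeff_subst_X_zero_add_X_one_mul_subst_X_one, Finset.mul_sum]
  refine Finset.sum_congr rfl fun j hj => ?_
  have hjl : j ≤ l := Nat.lt_succ_iff.mp (Finset.mem_range.mp hj)
  have hfac (n : ℕ) : (n.factorial : ℂ) ≠ 0 := Nat.cast_ne_zero.mpr n.factorial_ne_zero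
  have h₁ : (k : ℂ) + j + 1 ≠ 0 := by exact_mod_cast Nat.succ_ne_zero (k + j)
  have h₂ : (l : ℂ) - j + 1 ≠ 0 := by
    rw [← Nat.cast_sub hjl]; exact_mod_cast Nat.succ_ne_zero (l - j)
  simp only [coeff_rescale, bernoulliDifferenceQuotient, coeff_mk, Nat.cast_add_choose,
    Nat.cast_choose ℂ hjl]
  push_cast [Nat.cast_sub hjl]
  field_simp [hfac]
end
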